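/- A square (a × a) can be tiled with squares (2 × 2), (3 × 3), and (7 × 7) if and only if a ∉ {1, 5, 11}. -/

import Mathlib

/-- The `a1 × a2` grid of unit cells is partitioned by axis-aligned translated
copies of bricks from `bricks` placed at integer positions.  A placement
`(x, y, w, h)` covers cells `(i, j)` with `x ≤ i < x + w` and `y ≤ j < y + h`. -/
def Tiles (bricks : Finset (ℕ × ℕ)) (a1 a2 : ℕ) : Prop :=
  ∃ P : Finset (ℕ × ℕ × ℕ × ℕ),
    (∀ q ∈ P, (q.2.2.1, q.2.2.2) ∈ bricks ∧ q.1 + q.2.2.1 ≤ a1 ∧ q.2.1 + q.2.2.2 ≤ a2) ∧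
    (∀ i j : ℕ, i < a1 → j < a2 →
      ∃! q : ℕ × ℕ × ℕ × ℕ, q ∈ P ∧
        q.1 ≤ i ∧ i < q.1 + q.2.2.1 ∧ q.2.1 ≤ j ∧ j < q.2.1 + q.2.2.2)


/-!
Squares of side 0, 2, 3, 4 and 7 are tiled directly, and side 17 by a pinwheel. Bordering a
tiled `s × s` square (`s ≠ 1`) by a `6 × s` and an `(s + 6) × 6` rectangle, each cut into strips
of `2 × 2` and of `3 × 3` squares, tiles side `s + 6`; this reaches every side outside `{1, 5, 11}`.

For sides 5 and 11 there are integer weights on the cells with positive total such that every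
possible placement of a square covers nonpositive weight; summing the weight over the pieces of a
tiling gives a contradiction. For side 1 the constant weight works, as no square fits.
-/

open Finset

abbrev Placement := ℕ × ℕ × ℕ × ℕ

namespace Placement

abbrev Covers (q : Placement) (i j : ℕ) : Prop :=
  q.1 ≤ i ∧ i < q.1 + q.2.2.1 ∧ q.2.1 ≤ j ∧ j < q.2.1 + q.2.2.2

abbrev Fits (bricks : Finset (ℕ × ℕ)) (a1 a2 : ℕ) (q : Placement) : Prop :=
  (q.2.2.1, q.2.2.2) ∈ bricks ∧ q.1 + q.2.2.1 ≤ a1 ∧ q.2.1 + q.2.2.2 ≤ a2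

def transpose (q : Placement) : Placement := (q.2.1, q.1, q.2.2.2, q.2.2.1)

theorem transpose_involutive : Function.Involutive transpose := fun _ => rfl

def shiftRight (d : ℕ) (q : Placement) : Placement := (q.1 + d, q.2)

theorem shiftRight_injective (d : ℕ) : Function.Injective (shiftRight d) := by
  rintro ⟨x, _⟩ ⟨x', _⟩ h
  simp_all [shiftRight]

end Placement

open Placement

structure IsTiling (bricks : Finset (ℕ × ℕ)) (a1 a2 : ℕ) (P : Finset Placement) : Prop where
  fits : ∀ q ∈ P, Fits bricks a1 a2 q
  card_covers : ∀ i < a1, ∀ j < a2, #{q ∈ P | Covers q i j} = 1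

theorem tiles_iff_exists_isTiling {bricks : Finset (ℕ × ℕ)} {a1 a2 : ℕ} :
    Tiles bricks a1 a2 ↔ ∃ P, IsTiling bricks a1 a2 P := by
  refine exists_congr fun P => ⟨fun ⟨hfits, hcov⟩ => ⟨hfits, fun i hi j hj => ?_⟩,
    fun ⟨hfits, hcov⟩ => ⟨hfits, fun i j hi hj => ?_⟩⟩
  · simpa [card_eq_one_iff_existsUnique] using hcov i j hi hj
  · simpa [card_eq_one_iff_existsUnique] using hcov i hi j hj

namespace IsTiling

variable {bricks : Finset (ℕ × ℕ)} {a1 a2 : ℕ} {P : Finset Placement}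

theorem height_zero (a1 : ℕ) : IsTiling bricks a1 0 ∅ :=
  ⟨by simp, by simp⟩

theorem singleton {w h : ℕ} (hb : (w, h) ∈ bricks) : IsTiling bricks w h {(0, 0, w, h)} := by
  refine ⟨by simpa [Fits] using hb, fun i hi j hj => ?_⟩
  rw [filter_singleton, if_pos (by simp only [Covers]; omega), card_singleton]

theorem transpose (hP : IsTiling bricks a1 a2 P) :
    IsTiling (bricks.image Prod.swap) a2 a1 (P.image Placement.transpose) := by
  refine ⟨fun q hq => ?_, fun j hj i hi => ?_⟩
  · obtain ⟨q, hqP, rfl⟩ := mem_image.mp hq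
    obtain ⟨hb, hx, hy⟩ := hP.fits q hqP
    exact ⟨mem_image_of_mem _ hb, hy, hx⟩
  · rw [filter_image, card_image_of_injective _ transpose_involutive.injective,
      ← hP.card_covers i hi j hj]
    congr 1
    exact filter_congr fun q _ => by simp only [Placement.transpose, Covers]; tauto

theorem append_right {a1' : ℕ} {Q : Finset Placement} (hP : IsTiling bricks a1 a2 P)
    (hQ : IsTiling bricks a1' a2 Q) :
    IsTiling bricks (a1 + a1') a2 (P ∪ Q.image (shiftRight a1)) := by
  refine ⟨fun q hq => ?_, fun i hi j hj => ?_⟩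
  · rcases mem_union.mp hq with hq | hq
    · obtain ⟨hb, hx, hy⟩ := hP.fits q hq
      exact ⟨hb, by omega, hy⟩
    · obtain ⟨q, hqQ, rfl⟩ := mem_image.mp hq
      obtain ⟨hb, hx, hy⟩ := hQ.fits q hqQ
      exact ⟨hb, by simp only [shiftRight]; omega, hy⟩
  rw [filter_union, filter_image]
  by_cases hi1 : i < a1
  · have hQi : {q ∈ Q | Covers (shiftRight a1 q) i j} = ∅ :=
      filter_eq_empty_iff.mpr fun q _ h => by simp only [shiftRight] at h; omega
    rw [hQi, image_empty, union_empty, hP.card_covers i hi1 j hj]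
  · have hPi : {q ∈ P | Covers q i j} = ∅ :=
      filter_eq_empty_iff.mpr fun q hq h => by have := hP.fits q hq; omega
    rw [hPi, empty_union, card_image_of_injective _ (shiftRight_injective a1),
      ← hQ.card_covers (i - a1) (by omega) j hj]
    congr 1
    exact filter_congr fun q _ => by simp only [shiftRight, Covers]; omega

theorem sum_eq_sum_sum_covers (hP : IsTiling bricks a1 a2 P) (w : ℕ × ℕ → ℤ) :
    ∑ c ∈ range a1 ×ˢ range a2, w c =
      ∑ q ∈ P, ∑ c ∈ range a1 ×ˢ range a2 with Covers q c.1 c.2, w c := by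
  calc ∑ c ∈ range a1 ×ˢ range a2, w c
      = ∑ c ∈ range a1 ×ˢ range a2, ∑ q ∈ P with Covers q c.1 c.2, w c := by
        refine sum_congr rfl fun c hc => ?_
        simp only [mem_product, mem_range] at hc
        rw [sum_const, hP.card_covers c.1 hc.1 c.2 hc.2, one_smul]
    _ = ∑ q ∈ P, ∑ c ∈ range a1 ×ˢ range a2 with Covers q c.1 c.2, w c := by
        simp only [sum_filter]
        exact sum_comm

end IsTiling

namespace Tiles

variable {bricks : Finset (ℕ × ℕ)} {a1 a2 : ℕ}

theorem of_mem {w h : ℕ} (hb : (w, h) ∈ bricks) : Tiles bricks w h :=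
  tiles_iff_exists_isTiling.mpr ⟨_, .singleton hb⟩

theorem height_zero (a1 : ℕ) : Tiles bricks a1 0 :=
  tiles_iff_exists_isTiling.mpr ⟨_, .height_zero a1⟩

theorem transpose (h : Tiles bricks a1 a2) : Tiles (bricks.image Prod.swap) a2 a1 := by
  obtain ⟨P, hP⟩ := tiles_iff_exists_isTiling.mp h
  exact tiles_iff_exists_isTiling.mpr ⟨_, hP.transpose⟩

theorem transpose_iff : Tiles (bricks.image Prod.swap) a2 a1 ↔ Tiles bricks a1 a2 := by
  refine ⟨fun h => ?_, transpose⟩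
  simpa [image_image, Prod.swap_swap_eq] using h.transpose

theorem append_right {a1' : ℕ} (h : Tiles bricks a1 a2) (h' : Tiles bricks a1' a2) :
    Tiles bricks (a1 + a1') a2 := by
  obtain ⟨P, hP⟩ := tiles_iff_exists_isTiling.mp h
  obtain ⟨Q, hQ⟩ := tiles_iff_exists_isTiling.mp h'
  exact tiles_iff_exists_isTiling.mpr ⟨_, hP.append_right hQ⟩

theorem append_top {a2' : ℕ} (h : Tiles bricks a1 a2) (h' : Tiles bricks a1 a2') :
    Tiles bricks a1 (a2 + a2') :=
  transpose_iff.mp (h.transpose.append_right h'.transpose)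

theorem of_height_ne_one (h2 : Tiles bricks a1 2) (h3 : Tiles bricks a1 3) :
    ∀ {n : ℕ}, n ≠ 1 → Tiles bricks a1 n
  | 0, _ => height_zero a1
  | 2, _ => h2
  | 3, _ => h3
  | n + 4, _ => (of_height_ne_one h2 h3 (n := n + 2) (by omega)).append_top h2

theorem of_width_ne_one (h2 : Tiles bricks 2 a2) (h3 : Tiles bricks 3 a2) {n : ℕ} (hn : n ≠ 1) :
    Tiles bricks n a2 :=
  transpose_iff.mp (of_height_ne_one h2.transpose h3.transpose hn)

theorem add_six {s : ℕ} (h : Tiles bricks s s) (h22 : (2, 2) ∈ bricks)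
    (h33 : (3, 3) ∈ bricks) (hs : s ≠ 1) : Tiles bricks (s + 6) (s + 6) := by
  have h2 := of_mem h22
  have h3 := of_mem h33
  have hright : Tiles bricks 6 s :=
    of_height_ne_one ((h2.append_right h2).append_right h2) (h3.append_right h3) hs
  have htop : Tiles bricks (s + 6) 6 :=
    of_width_ne_one ((h2.append_top h2).append_top h2) (h3.append_top h3) (by omega)
  exact (h.append_right hright).append_top htop

theorem square_four (h22 : (2, 2) ∈ bricks) : Tiles bricks 4 4 :=
  have h2 := (of_mem h22).append_right (of_mem h22)
  h2.append_top h2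

theorem not_of_weight (w : ℕ × ℕ → ℤ) (htotal : 0 < ∑ c ∈ range a1 ×ˢ range a2, w c)
    (hblock : ∀ x ≤ a1, ∀ y ≤ a2, ∀ p ∈ bricks, x + p.1 ≤ a1 → y + p.2 ≤ a2 →
      ∑ c ∈ range a1 ×ˢ range a2 with Covers (x, y, p) c.1 c.2, w c ≤ 0) :
    ¬ Tiles bricks a1 a2 := by
  intro h
  obtain ⟨P, hP⟩ := tiles_iff_exists_isTiling.mp h
  have hnonpos : ∑ q ∈ P, ∑ c ∈ range a1 ×ˢ range a2 with Covers q c.1 c.2, w c ≤ 0 := by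
    refine sum_nonpos fun ⟨x, y, p⟩ hq => ?_
    obtain ⟨hb, hx, hy⟩ := hP.fits _ hq
    dsimp only at hb hx hy
    exact hblock x (by omega) y (by omega) p hb hx hy
  rw [← hP.sum_eq_sum_sum_covers] at hnonpos
  omega

end Tiles

def gridWeight (L : List (List ℤ)) (c : ℕ × ℕ) : ℤ := (L.getD c.1 []).getD c.2 0

abbrev squares237 : Finset (ℕ × ℕ) := {(2, 2), (3, 3), (7, 7)}

theorem not_tiles_squares237_one : ¬ Tiles squares237 1 1 :=
  Tiles.not_of_weight (fun _ => 1) (by decide) (by decide)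

theorem not_tiles_squares237_five : ¬ Tiles squares237 5 5 :=
  Tiles.not_of_weight (gridWeight
    [[1,  1,  1,  1, 1],
     [1, -3,  1, -3, 1],
     [1,  1, -4,  1, 1],
     [1, -3,  1, -3, 1],
     [1,  1,  1,  1, 1]]) (by decide) (by decide)

set_option maxRecDepth 10000 in
theorem not_tiles_squares237_eleven : ¬ Tiles squares237 11 11 :=
  Tiles.not_of_weight (gridWeight
    [[ 8, -1,  -3,   0,   8,  -6,   8,   0,  -3, -1,  8],
     [-1, -6,  10,  -7,  -1,  -1,  -1,  -7,  10, -6, -1],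
     [-3, 10, -16,  13,  -5,  -1,  -5,  13, -16, 10, -3],
     [ 0, -7,  13, -10,   2,   4,   2, -10,  13, -7,  0],
     [ 8, -1,  -5,   2,   6, -12,   6,   2,  -5, -1,  8],
     [-6, -1,  -1,   4, -12,  16, -12,   4,  -1, -1, -6],
     [ 8, -1,  -5,   2,   6, -12,   6,   2,  -5, -1,  8],
     [ 0, -7,  13, -10,   2,   4,   2, -10,  13, -7,  0],
     [-3, 10, -16,  13,  -5,  -1,  -5,  13, -16, 10, -3],
     [-1, -6,  10,  -7,  -1,  -1,  -1,  -7,  10, -6, -1],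
     [ 8, -1,  -3,   0,   8,  -6,   8,   0,  -3, -1,  8]]) (by decide) (by decide)

/-- A pinwheel: four `5 × 12` rectangles, each a column of `2 × 2` squares beside a column of
`3 × 3` squares, around a central `7 × 7` square. -/
def pinwheel17 : Finset Placement :=
  {(0, 5, 2, 2), (0, 7, 2, 2), (0, 9, 2, 2), (0, 11, 2, 2), (0, 13, 2, 2), (0, 15, 2, 2),
   (2, 5, 3, 3), (2, 8, 3, 3), (2, 11, 3, 3), (2, 14, 3, 3),
   (12, 0, 2, 2), (12, 2, 2, 2), (12, 4, 2, 2), (12, 6, 2, 2), (12, 8, 2, 2), (12, 10, 2, 2),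
   (14, 0, 3, 3), (14, 3, 3, 3), (14, 6, 3, 3), (14, 9, 3, 3),
   (0, 0, 2, 2), (2, 0, 2, 2), (4, 0, 2, 2), (6, 0, 2, 2), (8, 0, 2, 2), (10, 0, 2, 2),
   (0, 2, 3, 3), (3, 2, 3, 3), (6, 2, 3, 3), (9, 2, 3, 3),
   (5, 12, 2, 2), (7, 12, 2, 2), (9, 12, 2, 2), (11, 12, 2, 2), (13, 12, 2, 2), (15, 12, 2, 2),
   (5, 14, 3, 3), (8, 14, 3, 3), (11, 14, 3, 3), (14, 14, 3, 3),
   (5, 5, 7, 7)}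

theorem tiles_squares237_seventeen : Tiles squares237 17 17 :=
  tiles_iff_exists_isTiling.mpr ⟨pinwheel17, by decide, by decide⟩

theorem tiles_squares237 {a : ℕ} (h1 : a ≠ 1) (h5 : a ≠ 5) (h11 : a ≠ 11) :
    Tiles squares237 a a := by
  induction a using Nat.strong_induction_on with
  | _ a ih =>
    by_cases hstep : 6 ≤ a ∧ a ≠ 7 ∧ a ≠ 17
    · obtain ⟨s, rfl⟩ : ∃ s, a = s + 6 := ⟨a - 6, by omega⟩
      have hs : Tiles squares237 s s := ih s (by omega) (by omega) (by omega) (by omega)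
      exact hs.add_six (by decide) (by decide) (by omega)
    · obtain rfl | rfl | rfl | rfl | rfl | rfl :
          a = 0 ∨ a = 2 ∨ a = 3 ∨ a = 4 ∨ a = 7 ∨ a = 17 := by omega
      exacts [.height_zero 0, .of_mem (by decide), .of_mem (by decide), .square_four (by decide),
        .of_mem (by decide), tiles_squares237_seventeen]

theorem tiling_square_237_general (a : ℕ) :
    Tiles {(2, 2), (3, 3), (7, 7)} a a ↔ a ≠ 1 ∧ a ≠ 5 ∧ a ≠ 11 := by
  refine ⟨fun h => ⟨?_, ?_, ?_⟩, fun ⟨h1, h5, h11⟩ => tiles_squares237 h1 h5 h11⟩ <;> rintro rfl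
  exacts [not_tiles_squares237_one h, not_tiles_squares237_five h, not_tiles_squares237_eleven h]

/-- a square of side a ≥ 1 can be tiled with 2×2, 3×3 and 7×7
squares if and only if a ∉ {1, 5, 11}. -/
theorem tiling_square_237 (a : ℕ) (ha : 1 ≤ a) :
    Tiles {(2, 2), (3, 3), (7, 7)} a a ↔ a ≠ 1 ∧ a ≠ 5 ∧ a ≠ 11 :=
  tiling_square_237_general a
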